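/- arXiv:1810.00571 — 5 statements merged into one kernel-verified Lean document; each statement's English description precedes it below -/
import Mathlib

section
/- Let Q be a row-stochastic matrix admitting row-stochastic fractional powers Q^{1/K} and Q^{1/(K(K+1))} for all positive integers K (e.g. Q ultrametric). Then for any positive integers j, K: Q^{j/(K+1)} Blackwell dominates Q^{j/K}. -/
open scoped BigOperators

/-- A matrix is row-stochastic if all entries are nonnegative and each row sums to 1. -/
def RowStochastic {X Y : Type*} [Fintype Y] (B : Matrix X Y ℝ) : Prop :=
  (∀ i j, 0 ≤ B i j) ∧ ∀ i, ∑ j, B i j = 1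

/-- Blackwell dominance: `B1 ⪰_B B2` iff `B2 = B1 * R` for some row-stochastic `R`. -/
def Blackwell {X Y1 Y2 : Type*} [Fintype Y1] [Fintype Y2]
    (B1 : Matrix X Y1 ℝ) (B2 : Matrix X Y2 ℝ) : Prop :=
  ∃ R : Matrix Y1 Y2 ℝ, RowStochastic R ∧ B2 = B1 * R

lemma RowStochastic.mul {X Y Z : Type*} [Fintype Y] [Fintype Z]
    {A : Matrix X Y ℝ} {B : Matrix Y Z ℝ}
    (hA : RowStochastic A) (hB : RowStochastic B) : RowStochastic (A * B) := by
  constructor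
  · intro i j
    exact Finset.sum_nonneg fun k _ => mul_nonneg (hA.1 i k) (hB.1 k j)
  · intro i
    calc ∑ j, (A * B) i j = ∑ k, A i k * ∑ j, B k j := by
          simp only [Matrix.mul_apply, Finset.mul_sum]
          rw [Finset.sum_comm]
      _ = 1 := by simp only [hB.2, mul_one, hA.2]

lemma RowStochastic.pow {X : Type*} [Fintype X] [DecidableEq X]
    {A : Matrix X X ℝ} (hA : RowStochastic A) {m : ℕ} (hm : 0 < m) :
    RowStochastic (A ^ m) := by
  induction m with
  | zero => exact absurd hm (lt_irrefl 0)
  | succ k ih =>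
    rcases Nat.eq_zero_or_pos k with hk | hk
    · simpa [hk] using hA
    · rw [pow_succ]
      exact (ih hk).mul hA

/-- Let `T = Q^{1/(K(K+1))}` be row-stochastic with `T^(K+1) = Q^{1/K}` and
`T^K = Q^{1/(K+1)}` (so `T^(K(K+1)) = Q`).  Then `Q^{j/(K+1)} = (T^K)^j`
Blackwell dominates `Q^{j/K} = (T^(K+1))^j` for all positive integers `j`, `K`. -/
theorem fractionalPower_blackwell_denom {n : Type*} [Fintype n] [DecidableEq n]
    (Q T : Matrix n n ℝ) (hQ : RowStochastic Q) (hT : RowStochastic T)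
    (K : ℕ) (hK : 0 < K) (hrootQ : T ^ (K * (K + 1)) = Q)
    (j : ℕ) (hj : 0 < j) :
    Blackwell ((T ^ K) ^ j) ((T ^ (K + 1)) ^ j) := by
  refine ⟨T ^ j, hT.pow hj, ?_⟩
  rw [← pow_mul, ← pow_mul, ← pow_add]
  ring_nf
end

section
/- In a POMDP with Blackwell-ordered observation kernels, the one-step Bayesian filter outputs under the less informative kernel are convex combinations of filter outputs under the more informative kernel: if O(u+1) = O(u)R with R row-stochastic, then for each observation y, the updated belief T(π, y, u+1) equals Σ_r Λ(r) T(π, r, u), where Λ(r) = R(r,y)·σ(π,r,u)/σ(π,y,u+1) is a probability mass function in r. -/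
open scoped BigOperators

/-- One-step predicted belief `(P'π)(x)`. -/
noncomputable def pred {X : Type*} [Fintype X] (P : Matrix X X ℝ) (b : X → ℝ) : X → ℝ :=
  fun x => ∑ x', b x' * P x' x

/-- Normalizing constant `σ(π,y) = 1' O_y P' π` of the Bayesian filter. -/
noncomputable def sigNorm {X Y : Type*} [Fintype X] (P : Matrix X X ℝ) (O : Matrix X Y ℝ)
    (b : X → ℝ) (y : Y) : ℝ :=
  ∑ x, pred P b x * O x y

/-- Bayesian filter update `T(π,y) = O_y P' π / σ(π,y)`. -/
noncomputable def filt {X Y : Type*} [Fintype X] (P : Matrix X X ℝ) (O : Matrix X Y ℝ)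
    (b : X → ℝ) (y : Y) : X → ℝ :=
  fun x => pred P b x * O x y / sigNorm P O b y

/-- Under Blackwell dominance `O2 = O1 R`, the filtered belief under the less
informative kernel is a convex combination of filtered beliefs under the more
informative kernel, with weights `Λ(r) = R(r,y) σ(π,r) / σ(π,y)`. -/
theorem filter_mixture_of_blackwell {X Y1 Y2 : Type*} [Fintype X] [Fintype Y1] [Fintype Y2]
    (P : Matrix X X ℝ) (O1 : Matrix X Y1 ℝ) (O2 : Matrix X Y2 ℝ)
    (R : Matrix Y1 Y2 ℝ) (hR : RowStochastic R) (hO2 : O2 = O1 * R)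
    (b : X → ℝ) (hb0 : ∀ x, 0 ≤ b x) (hb1 : ∑ x, b x = 1)
    (y : Y2)
    (hσ1 : ∀ r : Y1, 0 < sigNorm P O1 b r) (hσ2 : 0 < sigNorm P O2 b y) :
    (sigNorm P O2 b y = ∑ r, R r y * sigNorm P O1 b r) ∧
    (∑ r, R r y * sigNorm P O1 b r / sigNorm P O2 b y = 1) ∧
    (∀ r, 0 ≤ R r y * sigNorm P O1 b r / sigNorm P O2 b y) ∧
    (∀ x, filt P O2 b y x =
      ∑ r, (R r y * sigNorm P O1 b r / sigNorm P O2 b y) * filt P O1 b r x) := by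
  have hsig : sigNorm P O2 b y = ∑ r, R r y * sigNorm P O1 b r := by
    simp only [sigNorm, hO2, Matrix.mul_apply, Finset.mul_sum, Finset.sum_mul]
    rw [Finset.sum_comm]
    congr 1; ext r; congr 1; ext x; ring
  refine ⟨hsig, ?_, ?_, ?_⟩
  · rw [← Finset.sum_div, ← hsig, div_self hσ2.ne']
  · intro r
    exact div_nonneg (mul_nonneg (hR.1 r y) (hσ1 r).le) hσ2.le
  · intro x
    simp only [filt]
    rw [eq_comm]
    have : ∀ r : Y1, R r y * sigNorm P O1 b r / sigNorm P O2 b y *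
        (pred P b x * O1 x r / sigNorm P O1 b r)
        = pred P b x * O1 x r * R r y / sigNorm P O2 b y := by
      intro r; have h1 := (hσ1 r).ne'; have h2 := hσ2.ne'; field_simp
    simp only [this]
    rw [← Finset.sum_div]
    congr 1
    simp only [hO2, Matrix.mul_apply, Finset.mul_sum]
    congr 1; ext r; ring
end

section
/- Myopic upper bound for Blackwell-ordered POMDPs: suppose the instantaneous cost C(π,u) is concave in π for each action u, and O(u) ⪰_B O(u+1) for all u. Then for any belief π at which the myopic policy selects action 1 (i.e. C(π,1) ≤ C(π,u) for all u), the optimal policy of the discounted POMDP also selects action 1; in general μ*(π) ≤ μ̄(π) where μ̄(π) = argmin_u C(π,u). -/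
open scoped BigOperators

/-- The `Q`-function of the discounted POMDP:
`Q(π,u) = C(π,u) + ρ ∑_y V(T(π,y,u)) σ(π,y,u)`. -/
noncomputable def Qval {X Y : Type*} [Fintype X] [Fintype Y] {m : ℕ}
    (P : Matrix X X ℝ) (O : Fin m → Matrix X Y ℝ)
    (C : (X → ℝ) → Fin m → ℝ) (ρ : ℝ) (V : (X → ℝ) → ℝ)
    (b : X → ℝ) (u : Fin m) : ℝ :=
  C b u + ρ * ∑ y, sigNorm P (O u) b y * V (filt P (O u) b y)


section Aux

lemma blackwell_refl' {X Y : Type*} [Fintype Y] [DecidableEq Y] (B : Matrix X Y ℝ) :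
    Blackwell B B := by
  refine ⟨1, ⟨fun i j => ?_, fun i => ?_⟩, by simp⟩
  · by_cases h : i = j <;> simp [Matrix.one_apply, h]
  · simp [Matrix.one_apply]

lemma blackwell_trans' {X Y1 Y2 Y3 : Type*} [Fintype Y1] [Fintype Y2] [Fintype Y3]
    {B1 : Matrix X Y1 ℝ} {B2 : Matrix X Y2 ℝ} {B3 : Matrix X Y3 ℝ}
    (h12 : Blackwell B1 B2) (h23 : Blackwell B2 B3) : Blackwell B1 B3 := by
  obtain ⟨R, ⟨hR0, hR1⟩, rfl⟩ := h12
  obtain ⟨S, ⟨hS0, hS1⟩, rfl⟩ := h23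
  refine ⟨R * S, ⟨fun i j => ?_, fun i => ?_⟩, Matrix.mul_assoc _ _ _⟩
  · exact Finset.sum_nonneg fun k _ => mul_nonneg (hR0 i k) (hS0 k j)
  · rw [show ∑ j, (R * S) i j = ∑ k, R i k * ∑ j, S k j by
      simp [Matrix.mul_apply, Finset.mul_sum]; rw [Finset.sum_comm]]
    simp [hS1, hR1]

lemma blackwell_cont_le {X Y1 Y2 : Type*} [Fintype X] [Fintype Y1] [Fintype Y2]
    (P : Matrix X X ℝ) (hP : RowStochastic P)
    {B1 : Matrix X Y1 ℝ} {B2 : Matrix X Y2 ℝ} (hB1 : RowStochastic B1)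
    (hbw : Blackwell B1 B2)
    (V : (X → ℝ) → ℝ) (hV : ConcaveOn ℝ (stdSimplex ℝ X) V)
    (b : X → ℝ) (hb : b ∈ stdSimplex ℝ X) :
    ∑ y1, sigNorm P B1 b y1 * V (filt P B1 b y1) ≤
      ∑ y2, sigNorm P B2 b y2 * V (filt P B2 b y2) := by
  classical
  obtain ⟨R, ⟨hR0, hR1⟩, rfl⟩ := hbw
  have hp0 : ∀ x, 0 ≤ pred P b x := fun x =>
    Finset.sum_nonneg fun x' _ => mul_nonneg (hb.1 x') (hP.1 x' x)
  have hσ1 : ∀ y1, 0 ≤ sigNorm P B1 b y1 := fun y1 =>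
    Finset.sum_nonneg fun x _ => mul_nonneg (hp0 x) (hB1.1 x y1)
  have hzero : ∀ y1, sigNorm P B1 b y1 = 0 → ∀ x, pred P b x * B1 x y1 = 0 := by
    intro y1 h x
    exact (Finset.sum_eq_zero_iff_of_nonneg
      (fun x _ => mul_nonneg (hp0 x) (hB1.1 x y1))).mp h x (Finset.mem_univ x)
  have hσ2eq : ∀ y2, sigNorm P (B1 * R) b y2 = ∑ y1, sigNorm P B1 b y1 * R y1 y2 := by
    intro y2
    simp only [sigNorm, Matrix.mul_apply, Finset.mul_sum, Finset.sum_mul]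
    rw [Finset.sum_comm]
    exact Finset.sum_congr rfl fun y1 _ => Finset.sum_congr rfl fun x _ => by ring
  have key : ∀ y2, ∑ y1, (sigNorm P B1 b y1 * R y1 y2) * V (filt P B1 b y1) ≤
      sigNorm P (B1 * R) b y2 * V (filt P (B1 * R) b y2) := by
    intro y2
    rcases eq_or_lt_of_le (Finset.sum_nonneg (fun y1 _ =>
        mul_nonneg (hσ1 y1) (hR0 y1 y2)) : (0:ℝ) ≤ ∑ y1, sigNorm P B1 b y1 * R y1 y2)
      with hσ2 | hσ2
    · have hterm : ∀ y1, sigNorm P B1 b y1 * R y1 y2 = 0 := by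
        intro y1
        exact (Finset.sum_eq_zero_iff_of_nonneg (fun y1 _ =>
          mul_nonneg (hσ1 y1) (hR0 y1 y2))).mp hσ2.symm y1 (Finset.mem_univ y1)
      rw [hσ2eq, ← hσ2]
      simp [hterm]
    · have hσ2pos : 0 < sigNorm P (B1 * R) b y2 := by rw [hσ2eq]; exact hσ2
      set σ2 := sigNorm P (B1 * R) b y2 with hσ2def
      set t : Finset Y1 := Finset.univ.filter (fun y1 => sigNorm P B1 b y1 * R y1 y2 ≠ 0)
        with ht
      set w : Y1 → ℝ := fun y1 => sigNorm P B1 b y1 * R y1 y2 / σ2 with hw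
      have hsum_t : ∑ y1 ∈ t, sigNorm P B1 b y1 * R y1 y2 = σ2 := by
        rw [ht, Finset.sum_filter_ne_zero, hσ2def, hσ2eq]
      have hw0 : ∀ y1 ∈ t, 0 ≤ w y1 := fun y1 _ =>
        div_nonneg (mul_nonneg (hσ1 y1) (hR0 y1 y2)) hσ2pos.le
      have hw1 : ∑ y1 ∈ t, w y1 = 1 := by
        rw [hw, ← Finset.sum_div, hsum_t, div_self hσ2pos.ne']
      have hmem : ∀ y1 ∈ t, filt P B1 b y1 ∈ stdSimplex ℝ X := by
        intro y1 hy1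
        have hne : sigNorm P B1 b y1 ≠ 0 := by
          intro h
          exact (Finset.mem_filter.mp hy1).2 (by rw [h, zero_mul])
        have hpos : 0 < sigNorm P B1 b y1 := lt_of_le_of_ne (hσ1 y1) (Ne.symm hne)
        constructor
        · intro x
          exact div_nonneg (mul_nonneg (hp0 x) (hB1.1 x y1)) hpos.le
        · simp only [filt, ← Finset.sum_div]
          rw [show ∑ x, pred P b x * B1 x y1 = sigNorm P B1 b y1 from rfl,
            div_self hne]
      have hcomb : ∑ y1 ∈ t, w y1 • filt P B1 b y1 = filt P (B1 * R) b y2 := by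
        funext x
        have h1 : (∑ y1 ∈ t, w y1 • filt P B1 b y1) x
            = ∑ y1 ∈ t, w y1 * filt P B1 b y1 x := by
          simp [Finset.sum_apply]
        rw [h1]
        have h2 : ∀ y1 ∈ t, w y1 * filt P B1 b y1 x
            = pred P b x * B1 x y1 * R y1 y2 / σ2 := by
          intro y1 hy1
          have hne : sigNorm P B1 b y1 ≠ 0 := by
            intro h
            exact (Finset.mem_filter.mp hy1).2 (by rw [h, zero_mul])
          simp only [hw, filt]
          field_simp
        rw [Finset.sum_congr rfl h2]
        have h3 : ∑ y1 ∈ t, pred P b x * B1 x y1 * R y1 y2 / σ2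
            = ∑ y1, pred P b x * B1 x y1 * R y1 y2 / σ2 := by
          apply Finset.sum_subset (Finset.subset_univ t)
          intro y1 _ hy1
          have h0 : sigNorm P B1 b y1 * R y1 y2 = 0 := by
            by_contra h
            exact hy1 (Finset.mem_filter.mpr ⟨Finset.mem_univ y1, h⟩)
          rcases mul_eq_zero.mp h0 with h | h
          · rw [hzero y1 h x, zero_mul, zero_div]
          · rw [h, mul_zero, zero_div]
        rw [h3]
        simp only [filt, Matrix.mul_apply, Finset.mul_sum, ← Finset.sum_div, hσ2def]
        congr 1
        exact Finset.sum_congr rfl fun y1 _ => by ring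
      have hjen := hV.le_map_sum hw0 hw1 hmem
      rw [hcomb] at hjen
      have h4 : ∑ y1, (sigNorm P B1 b y1 * R y1 y2) * V (filt P B1 b y1)
          = ∑ y1 ∈ t, (sigNorm P B1 b y1 * R y1 y2) * V (filt P B1 b y1) := by
        symm
        apply Finset.sum_subset (Finset.subset_univ t)
        intro y1 _ hy1
        have h0 : sigNorm P B1 b y1 * R y1 y2 = 0 := by
          by_contra h
          exact hy1 (Finset.mem_filter.mpr ⟨Finset.mem_univ y1, h⟩)
        rw [h0, zero_mul]
      rw [h4]
      have h5 : ∑ y1 ∈ t, (sigNorm P B1 b y1 * R y1 y2) * V (filt P B1 b y1)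
          = σ2 * ∑ y1 ∈ t, w y1 • V (filt P B1 b y1) := by
        rw [Finset.mul_sum]
        refine Finset.sum_congr rfl fun y1 _ => ?_
        simp only [hw, smul_eq_mul]
        field_simp
      rw [h5]
      exact mul_le_mul_of_nonneg_left hjen hσ2pos.le
  calc ∑ y1, sigNorm P B1 b y1 * V (filt P B1 b y1)
      = ∑ y1, ∑ y2, (sigNorm P B1 b y1 * R y1 y2) * V (filt P B1 b y1) := by
        refine Finset.sum_congr rfl fun y1 _ => ?_
        rw [← Finset.sum_mul, ← Finset.mul_sum, hR1 y1, mul_one]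
    _ = ∑ y2, ∑ y1, (sigNorm P B1 b y1 * R y1 y2) * V (filt P B1 b y1) :=
        Finset.sum_comm
    _ ≤ ∑ y2, sigNorm P (B1 * R) b y2 * V (filt P (B1 * R) b y2) :=
        Finset.sum_le_sum fun y2 _ => key y2


end Aux

/-- Myopic upper bound for Blackwell-ordered POMDPs: if the costs `C(·,u)` are
concave, the kernels satisfy `O(u) ⪰_B O(u+1)`, and `V` is the (concave) value
function satisfying Bellman's equation, then at any belief where the myopic policy
selects the first action (i.e. `C(π,1) ≤ C(π,u)` for all `u`), the optimal policy
also selects the first action: `Q(π,1) ≤ Q(π,u)` for all `u`. -/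
theorem myopic_upper_bound {X Y : Type*} [Fintype X] [Fintype Y] {m : ℕ} [NeZero m]
    (P : Matrix X X ℝ) (hP : RowStochastic P)
    (O : Fin m → Matrix X Y ℝ) (hO : ∀ u, RowStochastic (O u))
    (hdom : ∀ u : Fin m, ∀ h : u.1 + 1 < m, Blackwell (O u) (O ⟨u.1 + 1, h⟩))
    (C : (X → ℝ) → Fin m → ℝ)
    (hC : ∀ u, ConcaveOn ℝ (stdSimplex ℝ X) (fun b => C b u))
    (ρ : ℝ) (hρ0 : 0 ≤ ρ) (hρ1 : ρ < 1)
    (V : (X → ℝ) → ℝ) (hVconc : ConcaveOn ℝ (stdSimplex ℝ X) V)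
    (hBellman : ∀ b ∈ stdSimplex ℝ X,
      IsLeast {v : ℝ | ∃ u : Fin m, v = Qval P O C ρ V b u} (V b))
    (b : X → ℝ) (hb : b ∈ stdSimplex ℝ X)
    (hmyopic : ∀ u : Fin m, C b 0 ≤ C b u) :
    ∀ u : Fin m, Qval P O C ρ V b 0 ≤ Qval P O C ρ V b u := by
  
  intro u
  classical
  have hch : Blackwell (O 0) (O u) := by
    obtain ⟨k, hk⟩ := u
    induction k with
    | zero => exact (show (⟨0, hk⟩ : Fin m) = 0 from rfl) ▸ blackwell_refl' (O 0)
    | succ n ih =>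
        exact blackwell_trans' (ih (Nat.lt_of_succ_lt hk))
          (hdom ⟨n, Nat.lt_of_succ_lt hk⟩ hk)
  have hcont := blackwell_cont_le P hP (hO 0) hch V hVconc b hb
  unfold Qval
  exact add_le_add (hmyopic u) (mul_le_mul_of_nonneg_left hcont hρ0)
end

section
/- The value function of a discounted POMDP with costs C(π,u) concave in π is concave in π: V(π) = min_u [C(π,u) + ρ Σ_y V(T(π,y,u)) σ(π,y,u)] is a concave function of π on the belief simplex. -/
open scoped BigOperators

/-!
The Bellman operator contracts concavity defects: if `V(p a + q c) ≥ p V a + q V c - ε` on the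
simplex, then the same holds for each `Q`-function with `ε` replaced by `ρ ε`, because
`b ↦ σ(b,y) V(T(b,y))` is a perspective of `V` composed with the linear map `b ↦ O_y P' b`; a
minimum of such functions keeps the bound. A bounded fixed point therefore has defect at most
`ρⁿ · 2M` for every `n`, i.e. none.
-/

open Matrix Filter Topology

def ApproxConcaveOn {E : Type*} [AddCommMonoid E] [Module ℝ E] (s : Set E) (f : E → ℝ)
    (ε : ℝ) : Prop :=
  ∀ ⦃x⦄, x ∈ s → ∀ ⦃z⦄, z ∈ s → ∀ ⦃p q : ℝ⦄, 0 ≤ p → 0 ≤ q → p + q = 1 →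
    p * f x + q * f z - ε ≤ f (p • x + q • z)

namespace ApproxConcaveOn

variable {E : Type*} [AddCommMonoid E] [Module ℝ E] {s : Set E} {f g : E → ℝ} {ε δ : ℝ}

lemma nonneg (hf : ApproxConcaveOn s f ε) {x : E} (hx : x ∈ s) : 0 ≤ ε := by
  have h := hf hx hx zero_le_one le_rfl (add_zero 1)
  simp only [one_mul, zero_mul, add_zero, one_smul, zero_smul] at h
  linarith

lemma add (hf : ApproxConcaveOn s f ε) (hg : ApproxConcaveOn s g δ) :
    ApproxConcaveOn s (f + g) (ε + δ) := by
  intro x hx z hz p q hp hq hpq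
  have hfx := hf hx hz hp hq hpq
  have hgx := hg hx hz hp hq hpq
  simp only [Pi.add_apply]
  linarith

lemma const_mul (hf : ApproxConcaveOn s f ε) {c : ℝ} (hc : 0 ≤ c) :
    ApproxConcaveOn s (fun x => c * f x) (c * ε) := by
  intro x hx z hz p q hp hq hpq
  nlinarith [mul_le_mul_of_nonneg_left (hf hx hz hp hq hpq) hc]

lemma _root_.ConcaveOn.approxConcaveOn (hf : ConcaveOn ℝ s f) : ApproxConcaveOn s f 0 := by
  intro x hx z hz p q hp hq hpq
  simpa using hf.2 hx hz hp hq hpq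

lemma of_abs_le (hs : Convex ℝ s) {M : ℝ} (hM : ∀ x ∈ s, |f x| ≤ M) :
    ApproxConcaveOn s f (2 * M) := by
  intro x hx z hz p q hp hq hpq
  have hfx := abs_le.1 (hM x hx)
  have hfz := abs_le.1 (hM z hz)
  have hfb := abs_le.1 (hM _ (hs hx hz hp hq hpq))
  nlinarith [mul_le_mul_of_nonneg_left hfx.2 hp, mul_le_mul_of_nonneg_left hfz.2 hq]

lemma of_isLeast {ι : Type*} {g : ι → E → ℝ} (hs : Convex ℝ s)
    (hg : ∀ i, ApproxConcaveOn s (g i) ε) (hf : ∀ x ∈ s, IsLeast {v | ∃ i, v = g i x} (f x)) :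
    ApproxConcaveOn s f ε := by
  intro x hx z hz p q hp hq hpq
  obtain ⟨⟨i, hi⟩, -⟩ := hf _ (hs hx hz hp hq hpq)
  have hfx : f x ≤ g i x := (hf x hx).2 ⟨i, rfl⟩
  have hfz : f z ≤ g i z := (hf z hz).2 ⟨i, rfl⟩
  rw [hi]
  nlinarith [hg i hx hz hp hq hpq, mul_le_mul_of_nonneg_left hfx hp,
    mul_le_mul_of_nonneg_left hfz hq]

lemma concaveOn_of_tendsto (hs : Convex ℝ s) {ε : ℕ → ℝ} (hf : ∀ n, ApproxConcaveOn s f (ε n))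
    (hε : Tendsto ε atTop (𝓝 0)) : ConcaveOn ℝ s f := by
  refine ⟨hs, fun x hx z hz p q hp hq hpq => ?_⟩
  have hlim : Tendsto (fun n => p * f x + q * f z - ε n) atTop (𝓝 (p * f x + q * f z)) := by
    simpa using tendsto_const_nhds.sub hε
  simpa only [smul_eq_mul] using le_of_tendsto' hlim fun n => hf n hx hz hp hq hpq

lemma perspective (hf : ApproxConcaveOn s f ε) {α β : ℝ} (hα : 0 ≤ α) (hβ : 0 ≤ β) {x z : E}
    (hx : 0 < α → x ∈ s) (hz : 0 < β → z ∈ s) :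
    α * f x + β * f z - (α + β) * ε ≤ (α + β) * f ((α / (α + β)) • x + (β / (α + β)) • z) := by
  rcases hα.eq_or_lt with rfl | hα
  · rcases hβ.eq_or_lt with rfl | hβ
    · simp
    · have := hf.nonneg (hz hβ)
      simp only [zero_mul, zero_add, zero_div, zero_smul, div_self hβ.ne', one_smul]
      nlinarith
  rcases hβ.eq_or_lt with rfl | hβ
  · have := hf.nonneg (hx hα)
    simp only [zero_mul, add_zero, zero_div, zero_smul, div_self hα.ne', one_smul]
    nlinarith
  have hαβ : 0 < α + β := by positivity
  have h := hf (hx hα) (hz hβ) (div_nonneg hα.le hαβ.le) (div_nonneg hβ.le hαβ.le)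
    (by field_simp)
  have h' := mul_le_mul_of_nonneg_left h hαβ.le
  have expand : (α + β) * (α / (α + β) * f x + β / (α + β) * f z - ε)
      = α * f x + β * f z - (α + β) * ε := by
    field_simp
  linarith

end ApproxConcaveOn

section BayesianFilter

variable {X Y : Type*} [Fintype X]

lemma vecMul_nonneg {B : Matrix X Y ℝ} (hB : ∀ i j, 0 ≤ B i j) {b : X → ℝ}
    (hb : ∀ i, 0 ≤ b i) (j : Y) : 0 ≤ (b ᵥ* B) j :=
  Finset.sum_nonneg fun _ _ => mul_nonneg (hb _) (hB _ _)

lemma RowStochastic.vecMul_mem_stdSimplex [Fintype Y] {B : Matrix X Y ℝ} (hB : RowStochastic B)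
    {b : X → ℝ} (hb : b ∈ stdSimplex ℝ X) : b ᵥ* B ∈ stdSimplex ℝ Y := by
  refine ⟨vecMul_nonneg hB.1 hb.1, ?_⟩
  simp only [vecMul, dotProduct]
  rw [Finset.sum_comm]
  simp [← Finset.mul_sum, hB.2, hb.2]

variable {P : Matrix X X ℝ} {O : Matrix X Y ℝ}

lemma pred_eq_vecMul (b : X → ℝ) : pred P b = b ᵥ* P := rfl

lemma sigNorm_eq_vecMul (b : X → ℝ) : sigNorm P O b = b ᵥ* P ᵥ* O := rfl

lemma sigNorm_mem_stdSimplex [Fintype Y] (hP : RowStochastic P) (hO : RowStochastic O) {b : X → ℝ}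
    (hb : b ∈ stdSimplex ℝ X) : sigNorm P O b ∈ stdSimplex ℝ Y :=
  hO.vecMul_mem_stdSimplex (hP.vecMul_mem_stdSimplex hb)

lemma sigNorm_add_smul (a c : X → ℝ) (p q : ℝ) :
    sigNorm P O (p • a + q • c) = p • sigNorm P O a + q • sigNorm P O c := by
  simp only [sigNorm_eq_vecMul, add_vecMul, smul_vecMul]

lemma sigNorm_mul_filt (hP : ∀ i j, 0 ≤ P i j) (hO : ∀ i j, 0 ≤ O i j) {b : X → ℝ}
    (hb : ∀ x, 0 ≤ b x) (y : Y) (x : X) :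
    sigNorm P O b y * filt P O b y x = pred P b x * O x y := by
  rcases (vecMul_nonneg hO (vecMul_nonneg hP hb) y).eq_or_lt with hσ | hσ
  · have hterm := (Finset.sum_eq_zero_iff_of_nonneg fun i _ =>
      mul_nonneg (vecMul_nonneg hP hb i) (hO i y)).1 hσ.symm x (Finset.mem_univ x)
    rw [sigNorm_eq_vecMul, ← hσ, zero_mul, pred_eq_vecMul, hterm]
  · exact mul_div_cancel₀ _ hσ.ne'

lemma filt_mem_stdSimplex (hP : ∀ i j, 0 ≤ P i j) (hO : ∀ i j, 0 ≤ O i j) {b : X → ℝ}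
    (hb : ∀ x, 0 ≤ b x) {y : Y} (hσ : 0 < sigNorm P O b y) : filt P O b y ∈ stdSimplex ℝ X := by
  refine ⟨fun x => div_nonneg (mul_nonneg (vecMul_nonneg hP hb x) (hO x y)) hσ.le, ?_⟩
  change ∑ x, pred P b x * O x y / sigNorm P O b y = 1
  rw [← Finset.sum_div, div_eq_one_iff_eq hσ.ne']
  rfl

/-- Also valid when `σ(p a + q c, y) = 0`: both sides are then `0`, by the convention `x / 0 = 0`. -/
lemma filt_add_smul (hP : ∀ i j, 0 ≤ P i j) (hO : ∀ i j, 0 ≤ O i j) {a c : X → ℝ}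
    (ha : ∀ x, 0 ≤ a x) (hc : ∀ x, 0 ≤ c x) (p q : ℝ) (y : Y) :
    filt P O (p • a + q • c) y =
      (p * sigNorm P O a y / sigNorm P O (p • a + q • c) y) • filt P O a y
        + (q * sigNorm P O c y / sigNorm P O (p • a + q • c) y) • filt P O c y := by
  funext x
  have hpred : pred P (p • a + q • c) x = p * pred P a x + q * pred P c x := by
    simp [pred_eq_vecMul, add_vecMul, smul_vecMul]
  calc filt P O (p • a + q • c) y x
      = (p * (pred P a x * O x y) + q * (pred P c x * O x y)) / sigNorm P O (p • a + q • c) y := by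
        simp only [filt, hpred]
        ring
    _ = _ := by
        rw [← sigNorm_mul_filt hP hO ha, ← sigNorm_mul_filt hP hO hc]
        simp only [Pi.add_apply, Pi.smul_apply, smul_eq_mul]
        ring

variable (P O)

lemma ApproxConcaveOn.filterAverage [Fintype Y] (hP : RowStochastic P) (hO : RowStochastic O)
    {V : (X → ℝ) → ℝ} {ε : ℝ} (hV : ApproxConcaveOn (stdSimplex ℝ X) V ε) :
    ApproxConcaveOn (stdSimplex ℝ X) (fun b => ∑ y, sigNorm P O b y * V (filt P O b y)) ε := by
  intro a ha c hc p q hp hq hpq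
  have hb := convex_stdSimplex ℝ X ha hc hp hq hpq
  have hσ (b : X → ℝ) (hb : b ∈ stdSimplex ℝ X) (y : Y) : 0 ≤ sigNorm P O b y :=
    (sigNorm_mem_stdSimplex hP hO hb).1 y
  have hy (y : Y) : p * (sigNorm P O a y * V (filt P O a y))
      + q * (sigNorm P O c y * V (filt P O c y)) - sigNorm P O (p • a + q • c) y * ε
      ≤ sigNorm P O (p • a + q • c) y * V (filt P O (p • a + q • c) y) := by
    have hsplit : sigNorm P O (p • a + q • c) y = p * sigNorm P O a y + q * sigNorm P O c y :=
      congrFun (sigNorm_add_smul a c p q) y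
    rw [filt_add_smul hP.1 hO.1 ha.1 hc.1, hsplit]
    have := hV.perspective (mul_nonneg hp (hσ a ha y)) (mul_nonneg hq (hσ c hc y))
      (fun h => filt_mem_stdSimplex hP.1 hO.1 ha.1 (pos_of_mul_pos_right h hp))
      (fun h => filt_mem_stdSimplex hP.1 hO.1 hc.1 (pos_of_mul_pos_right h hq))
    linarith
  have hsum := Finset.sum_le_sum fun y (_ : y ∈ Finset.univ) => hy y
  simp only [Finset.sum_sub_distrib, Finset.sum_add_distrib, ← Finset.mul_sum, ← Finset.sum_mul,
    (sigNorm_mem_stdSimplex hP hO hb).2, one_mul] at hsum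
  exact hsum

end BayesianFilter

lemma ApproxConcaveOn.qval {X Y : Type*} [Fintype X] [Fintype Y] {m : ℕ}
    {P : Matrix X X ℝ} (hP : RowStochastic P)
    {O : Fin m → Matrix X Y ℝ} (hO : ∀ u, RowStochastic (O u))
    {C : (X → ℝ) → Fin m → ℝ} (hC : ∀ u, ConcaveOn ℝ (stdSimplex ℝ X) (fun b => C b u))
    {ρ : ℝ} (hρ : 0 ≤ ρ) {V : (X → ℝ) → ℝ} {ε : ℝ}
    (hV : ApproxConcaveOn (stdSimplex ℝ X) V ε) (u : Fin m) :
    ApproxConcaveOn (stdSimplex ℝ X) (fun b => Qval P O C ρ V b u) (ρ * ε) := by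
  have h := (hC u).approxConcaveOn.add ((hV.filterAverage P (O u) hP (hO u)).const_mul hρ)
  rw [zero_add] at h
  exact h

theorem value_function_concave_general {X Y : Type*} [Fintype X] [Fintype Y] {m : ℕ}
    (P : Matrix X X ℝ) (hP : RowStochastic P)
    (O : Fin m → Matrix X Y ℝ) (hO : ∀ u, RowStochastic (O u))
    (C : (X → ℝ) → Fin m → ℝ)
    (hC : ∀ u, ConcaveOn ℝ (stdSimplex ℝ X) (fun b => C b u))
    (ρ : ℝ) (hρ0 : 0 ≤ ρ) (hρ1 : ρ < 1)
    (V : (X → ℝ) → ℝ)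
    (hVbdd : ∃ M : ℝ, ∀ b ∈ stdSimplex ℝ X, |V b| ≤ M)
    (hBellman : ∀ b ∈ stdSimplex ℝ X,
      IsLeast {v : ℝ | ∃ u : Fin m, v = Qval P O C ρ V b u} (V b)) :
    ConcaveOn ℝ (stdSimplex ℝ X) V := by
  obtain ⟨M, hM⟩ := hVbdd
  have hs := convex_stdSimplex ℝ X
  have hstep (ε : ℝ) (hV : ApproxConcaveOn (stdSimplex ℝ X) V ε) :
      ApproxConcaveOn (stdSimplex ℝ X) V (ρ * ε) :=
    ApproxConcaveOn.of_isLeast hs (hV.qval hP hO hC hρ0) hBellman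
  have hiter (n : ℕ) : ApproxConcaveOn (stdSimplex ℝ X) V (ρ ^ n * (2 * M)) := by
    induction n with
    | zero => simpa using ApproxConcaveOn.of_abs_le hs hM
    | succ n ih => simpa only [pow_succ', mul_assoc] using hstep _ ih
  refine ApproxConcaveOn.concaveOn_of_tendsto hs hiter ?_
  simpa using (tendsto_pow_atTop_nhds_zero_of_lt_one hρ0 hρ1).mul_const (2 * M)

/-- The value function of a discounted POMDP with costs concave in the belief is
concave in the belief: any bounded solution `V` of Bellman's equation
`V(π) = min_u [C(π,u) + ρ ∑_y V(T(π,y,u)) σ(π,y,u)]` is concave on the simplex. -/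
theorem value_function_concave {X Y : Type*} [Fintype X] [Fintype Y] {m : ℕ} [NeZero m]
    (P : Matrix X X ℝ) (hP : RowStochastic P)
    (O : Fin m → Matrix X Y ℝ) (hO : ∀ u, RowStochastic (O u))
    (C : (X → ℝ) → Fin m → ℝ)
    (hC : ∀ u, ConcaveOn ℝ (stdSimplex ℝ X) (fun b => C b u))
    (hCbdd : ∃ M : ℝ, ∀ b ∈ stdSimplex ℝ X, ∀ u, |C b u| ≤ M)
    (ρ : ℝ) (hρ0 : 0 ≤ ρ) (hρ1 : ρ < 1)
    (V : (X → ℝ) → ℝ)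
    (hVbdd : ∃ M : ℝ, ∀ b ∈ stdSimplex ℝ X, |V b| ≤ M)
    (hBellman : ∀ b ∈ stdSimplex ℝ X,
      IsLeast {v : ℝ | ∃ u : Fin m, v = Qval P O C ρ V b u} (V b)) :
    ConcaveOn ℝ (stdSimplex ℝ X) V :=
  value_function_concave_general P hP O hO C hC ρ hρ0 hρ1 V hVbdd hBellman
end

section
/- Ordinal sensitivity of optimal cost under Blackwell dominance: consider two discounted POMDPs θ₁ = (P, O⁽¹⁾(·), C, ρ) and θ₂ = (P, O⁽²⁾(·), C, ρ) differing only in observation kernels, with concave costs C(·,u) and O⁽¹⁾(u) ⪰_B O⁽²⁾(u) for every action u. Then the optimal value functions satisfy V₁(π) ≤ V₂(π) for all beliefs π. -/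
open scoped BigOperators

section AuxBW
open Finset

lemma jensen_mix {X ι : Type*} [Fintype X] [Fintype ι]
    {W : (X → ℝ) → ℝ} (hW : ConcaveOn ℝ (stdSimplex ℝ X) W)
    (f : ι → X → ℝ) (hf : ∀ i x, 0 ≤ f i x) :
    ∑ i, (∑ x, f i x) * W (fun x => f i x / (∑ x', f i x')) ≤
      (∑ i, ∑ x, f i x) * W (fun x => (∑ i, f i x) / (∑ i, ∑ x', f i x')) := by
  set s : ι → ℝ := fun i => ∑ x, f i x with hs
  have hs0 : ∀ i, 0 ≤ s i := fun i => Finset.sum_nonneg fun x _ => hf i x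
  set S : ℝ := ∑ i, s i with hS
  have hS0 : 0 ≤ S := Finset.sum_nonneg fun i _ => hs0 i
  rcases eq_or_lt_of_le hS0 with hSz | hSpos
  · have hsz : ∀ i ∈ (univ : Finset ι), s i * W (fun x => f i x / s i) = 0 := by
      intro i _
      have : s i = 0 := le_antisymm (by
        have := Finset.single_le_sum (fun j (_ : j ∈ univ) => hs0 j) (mem_univ i)
        linarith) (hs0 i)
      rw [this, zero_mul]
    rw [Finset.sum_eq_zero hsz, ← hSz, zero_mul]
  · -- positive total mass
    have hSne : S ≠ 0 := ne_of_gt hSpos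
    set t : Finset ι := univ.filter (fun i => 0 < s i) with ht
    have hmemt : ∀ i, i ∈ t ↔ 0 < s i := by
      intro i; simp [ht]
    have hfz : ∀ i, s i = 0 → ∀ x, f i x = 0 := by
      intro i hsi x
      have h1 : f i x ≤ s i := Finset.single_le_sum (fun x' (_ : x' ∈ univ) => hf i x') (mem_univ x)
      have := hf i x; linarith
    set w : ι → ℝ := fun i => s i / S with hw
    set p : ι → X → ℝ := fun i => fun x => f i x / s i with hp
    have h₀ : ∀ i ∈ t, 0 ≤ w i := fun i _ => div_nonneg (hs0 i) hS0
    have hsum_t : ∑ i ∈ t, s i = S := by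
      rw [hS, ht]
      exact Finset.sum_filter_of_ne (fun i _ hne => lt_of_le_of_ne (hs0 i) (Ne.symm hne))
    have h₁ : ∑ i ∈ t, w i = 1 := by
      rw [hw]; rw [← Finset.sum_div, hsum_t, div_self hSne]
    have hmem : ∀ i ∈ t, p i ∈ stdSimplex ℝ X := by
      intro i hi
      have hsi : 0 < s i := (hmemt i).1 hi
      constructor
      · intro x; exact div_nonneg (hf i x) hsi.le
      · rw [hp]; simp only; rw [← Finset.sum_div, div_self (ne_of_gt hsi)]
    have hjen := hW.le_map_sum h₀ h₁ hmem
    have hsum_p : (∑ i ∈ t, w i • p i) = fun x => (∑ i, f i x) / S := by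
      funext x
      have : (∑ i ∈ t, w i • p i) x = ∑ i ∈ t, (s i / S) * (f i x / s i) := by
        simp [hw, hp, Finset.sum_apply]
      rw [this]
      have heq : ∀ i ∈ t, (s i / S) * (f i x / s i) = f i x / S := by
        intro i hi
        have hsi : 0 < s i := (hmemt i).1 hi
        field_simp
      rw [Finset.sum_congr rfl heq, ← Finset.sum_div]
      congr 1
      rw [ht]
      refine Finset.sum_filter_of_ne (fun i _ hne => ?_)
      rcases eq_or_lt_of_le (hs0 i) with h | h
      · exact absurd (hfz i h.symm x) hne
      · exact h
    rw [hsum_p] at hjen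
    have hLHS : (∑ i, s i * W (p i)) = ∑ i ∈ t, s i * W (p i) := by
      symm; rw [ht]
      refine Finset.sum_filter_of_ne (fun i _ hne => ?_)
      rcases eq_or_lt_of_le (hs0 i) with h | h
      · exact absurd (by rw [← h, zero_mul]) hne
      · exact h
    calc ∑ i, s i * W (p i) = ∑ i ∈ t, s i * W (p i) := hLHS
      _ = S * ∑ i ∈ t, w i • W (p i) := by
          rw [Finset.mul_sum]
          refine Finset.sum_congr rfl (fun i _ => ?_)
          rw [hw]; simp only [smul_eq_mul]; field_simp
      _ ≤ S * W (fun x => (∑ i, f i x) / S) := by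
          exact mul_le_mul_of_nonneg_left hjen hS0


variable {X Y : Type*} [Fintype X] [Fintype Y]

lemma pred_nonneg {P : Matrix X X ℝ} (hP : RowStochastic P) {b : X → ℝ}
    (hb : b ∈ stdSimplex ℝ X) (x : X) : 0 ≤ pred P b x :=
  Finset.sum_nonneg fun x' _ => mul_nonneg (hb.1 x') (hP.1 x' x)

lemma sum_pred {P : Matrix X X ℝ} (hP : RowStochastic P) {b : X → ℝ}
    (hb : b ∈ stdSimplex ℝ X) : ∑ x, pred P b x = 1 := by
  unfold pred
  rw [Finset.sum_comm]
  have : ∀ x' ∈ univ, ∑ x, b x' * P x' x = b x' := by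
    intro x' _
    rw [← Finset.mul_sum, hP.2 x', mul_one]
  rw [Finset.sum_congr rfl this, hb.2]

lemma sigNorm_nonneg {P : Matrix X X ℝ} (hP : RowStochastic P) {O : Matrix X Y ℝ}
    (hO : ∀ x y, 0 ≤ O x y) {b : X → ℝ} (hb : b ∈ stdSimplex ℝ X) (y : Y) :
    0 ≤ sigNorm P O b y :=
  Finset.sum_nonneg fun x _ => mul_nonneg (pred_nonneg hP hb x) (hO x y)

lemma sum_sigNorm {P : Matrix X X ℝ} (hP : RowStochastic P) {O : Matrix X Y ℝ}
    (hO : RowStochastic O) {b : X → ℝ} (hb : b ∈ stdSimplex ℝ X) :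
    ∑ y, sigNorm P O b y = 1 := by
  unfold sigNorm
  rw [Finset.sum_comm]
  have : ∀ x ∈ univ, ∑ y, pred P b x * O x y = pred P b x := by
    intro x _; rw [← Finset.mul_sum, hO.2 x, mul_one]
  rw [Finset.sum_congr rfl this, sum_pred hP hb]

lemma filt_mem {P : Matrix X X ℝ} (hP : RowStochastic P) {O : Matrix X Y ℝ}
    (hO : ∀ x y, 0 ≤ O x y) {b : X → ℝ} (hb : b ∈ stdSimplex ℝ X) {y : Y}
    (hy : 0 < sigNorm P O b y) : filt P O b y ∈ stdSimplex ℝ X := by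
  constructor
  · intro x
    exact div_nonneg (mul_nonneg (pred_nonneg hP hb x) (hO x y)) hy.le
  · unfold filt
    rw [← Finset.sum_div]
    exact div_self (ne_of_gt hy)

lemma term_rescale {W : (X → ℝ) → ℝ} {q : X → ℝ} {a : ℝ} (ha : 0 ≤ a) :
    (∑ x, a * q x) * W (fun x => a * q x / (∑ x', a * q x')) =
      a * ((∑ x, q x) * W (fun x => q x / (∑ x', q x'))) := by
  rcases eq_or_lt_of_le ha with h | h
  · simp [← h]
  · have hsum : (∑ x', a * q x') = a * ∑ x', q x' := by rw [← Finset.mul_sum]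
    have harg : (fun x => a * q x / (∑ x', a * q x')) = fun x => q x / (∑ x', q x') := by
      funext x
      rw [hsum, mul_div_mul_left _ _ (ne_of_gt h)]
    rw [harg, hsum]; ring

lemma step_concave {P : Matrix X X ℝ} (hP : RowStochastic P) {O : Matrix X Y ℝ}
    (hO : ∀ x y, 0 ≤ O x y)
    {W : (X → ℝ) → ℝ} (hW : ConcaveOn ℝ (stdSimplex ℝ X) W) (y : Y)
    {b1 b2 : X → ℝ} (hb1 : b1 ∈ stdSimplex ℝ X) (hb2 : b2 ∈ stdSimplex ℝ X)
    {a c : ℝ} (ha : 0 ≤ a) (hc : 0 ≤ c) :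
    a * (sigNorm P O b1 y * W (filt P O b1 y)) + c * (sigNorm P O b2 y * W (filt P O b2 y))
      ≤ sigNorm P O (a • b1 + c • b2) y * W (filt P O (a • b1 + c • b2) y) := by
  classical
  set f : Fin 2 → X → ℝ :=
    ![fun x => a * (pred P b1 x * O x y), fun x => c * (pred P b2 x * O x y)] with hf
  have hf0 : f 0 = fun x => a * (pred P b1 x * O x y) := rfl
  have hf1 : f 1 = fun x => c * (pred P b2 x * O x y) := rfl
  have hfnn : ∀ i x, 0 ≤ f i x := by
    intro i x
    fin_cases i
    · exact mul_nonneg ha (mul_nonneg (pred_nonneg hP hb1 x) (hO x y))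
    · exact mul_nonneg hc (mul_nonneg (pred_nonneg hP hb2 x) (hO x y))
  have hjen := jensen_mix hW f hfnn
  have hFsum : ∀ x, (∑ i, f i x) = pred P (a • b1 + c • b2) x * O x y := by
    intro x
    rw [Fin.sum_univ_two, hf0, hf1]
    have hlin : pred P (a • b1 + c • b2) x = a * pred P b1 x + c * pred P b2 x := by
      unfold pred
      simp only [Pi.add_apply, Pi.smul_apply, smul_eq_mul]
      rw [Finset.mul_sum, Finset.mul_sum, ← Finset.sum_add_distrib]
      exact Finset.sum_congr rfl fun x' _ => by ring
    rw [hlin]; ring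
  have hS : (∑ i, ∑ x, f i x) = sigNorm P O (a • b1 + c • b2) y := by
    rw [Finset.sum_comm]
    unfold sigNorm
    exact Finset.sum_congr rfl fun x _ => hFsum x
  have harg : (fun x => (∑ i : Fin 2, f i x) / (∑ i : Fin 2, ∑ x' : X, f i x'))
      = filt P O (a • b1 + c • b2) y := by
    funext x; rw [hS, hFsum x]; rfl
  rw [harg, hS, Fin.sum_univ_two, hf0, hf1, term_rescale ha, term_rescale hc] at hjen
  exact hjen

lemma blackwell_sum {Y2 : Type*} [Fintype Y2]
    {P : Matrix X X ℝ} (hP : RowStochastic P)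
    {O1 : Matrix X Y ℝ} {O2 : Matrix X Y2 ℝ}
    (hO1 : ∀ x y, 0 ≤ O1 x y) {R : Matrix Y Y2 ℝ} (hR : RowStochastic R)
    (hO : O2 = O1 * R)
    {W : (X → ℝ) → ℝ} (hW : ConcaveOn ℝ (stdSimplex ℝ X) W)
    {b : X → ℝ} (hb : b ∈ stdSimplex ℝ X) :
    ∑ y1, sigNorm P O1 b y1 * W (filt P O1 b y1)
      ≤ ∑ y2, sigNorm P O2 b y2 * W (filt P O2 b y2) := by
  classical
  have key : ∀ y2 : Y2,
      ∑ y1, R y1 y2 * (sigNorm P O1 b y1 * W (filt P O1 b y1))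
        ≤ sigNorm P O2 b y2 * W (filt P O2 b y2) := by
    intro y2
    set f : Y → X → ℝ := fun y1 x => R y1 y2 * (pred P b x * O1 x y1) with hf
    have hfnn : ∀ y1 x, 0 ≤ f y1 x := fun y1 x =>
      mul_nonneg (hR.1 y1 y2) (mul_nonneg (pred_nonneg hP hb x) (hO1 x y1))
    have hjen := jensen_mix hW f hfnn
    have hFsum : ∀ x, (∑ y1, f y1 x) = pred P b x * O2 x y2 := by
      intro x
      rw [hO]
      rw [Matrix.mul_apply, Finset.mul_sum]
      exact Finset.sum_congr rfl fun y1 _ => by rw [hf]; ring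
    have hS : (∑ y1, ∑ x, f y1 x) = sigNorm P O2 b y2 := by
      rw [Finset.sum_comm]
      unfold sigNorm
      exact Finset.sum_congr rfl fun x _ => hFsum x
    have harg : (fun x => (∑ y1, f y1 x) / (∑ y1, ∑ x', f y1 x'))
        = filt P O2 b y2 := by
      funext x; rw [hS, hFsum x]; rfl
    rw [harg, hS] at hjen
    refine le_trans (le_of_eq ?_) hjen
    refine Finset.sum_congr rfl fun y1 _ => ?_
    rw [hf]
    exact (term_rescale (hR.1 y1 y2)).symm
  calc ∑ y1, sigNorm P O1 b y1 * W (filt P O1 b y1)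
      = ∑ y1, ∑ y2, R y1 y2 * (sigNorm P O1 b y1 * W (filt P O1 b y1)) := by
        refine Finset.sum_congr rfl fun y1 _ => ?_
        rw [← Finset.sum_mul, hR.2 y1, one_mul]
    _ = ∑ y2, ∑ y1, R y1 y2 * (sigNorm P O1 b y1 * W (filt P O1 b y1)) := Finset.sum_comm
    _ ≤ ∑ y2, sigNorm P O2 b y2 * W (filt P O2 b y2) :=
        Finset.sum_le_sum fun y2 _ => key y2

section Op
variable {m : ℕ} [NeZero m] {P : Matrix X X ℝ} {O : Fin m → Matrix X Y ℝ}
  {C : (X → ℝ) → Fin m → ℝ} {ρ : ℝ}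

lemma Qval_concave (hP : RowStochastic P) (hO : ∀ u, RowStochastic (O u))
    (hC : ∀ u, ConcaveOn ℝ (stdSimplex ℝ X) (fun b => C b u)) (hρ0 : 0 ≤ ρ)
    {W : (X → ℝ) → ℝ} (hW : ConcaveOn ℝ (stdSimplex ℝ X) W) (u : Fin m) :
    ConcaveOn ℝ (stdSimplex ℝ X) (fun b => Qval P O C ρ W b u) := by
  have hsum : ConcaveOn ℝ (stdSimplex ℝ X)
      (fun b => ρ * ∑ y, sigNorm P (O u) b y * W (filt P (O u) b y)) := by
    refine ⟨convex_stdSimplex ℝ X, ?_⟩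
    intro b1 hb1 b2 hb2 a c ha hc hac
    simp only [smul_eq_mul]
    have h1 : a * (ρ * ∑ y, sigNorm P (O u) b1 y * W (filt P (O u) b1 y))
        + c * (ρ * ∑ y, sigNorm P (O u) b2 y * W (filt P (O u) b2 y))
        = ρ * ∑ y, (a * (sigNorm P (O u) b1 y * W (filt P (O u) b1 y))
            + c * (sigNorm P (O u) b2 y * W (filt P (O u) b2 y))) := by
      rw [Finset.sum_add_distrib, ← Finset.mul_sum, ← Finset.mul_sum]; ring
    rw [h1]
    refine mul_le_mul_of_nonneg_left (Finset.sum_le_sum fun y _ => ?_) hρ0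
    exact step_concave hP (hO u).1 hW y hb1 hb2 ha hc
  exact (hC u).add hsum

noncomputable def Qop (P : Matrix X X ℝ) (O : Fin m → Matrix X Y ℝ)
    (C : (X → ℝ) → Fin m → ℝ) (ρ : ℝ) (V : (X → ℝ) → ℝ) (b : X → ℝ) : ℝ :=
  ⨅ u : Fin m, Qval P O C ρ V b u

lemma Qop_concave (hP : RowStochastic P) (hO : ∀ u, RowStochastic (O u))
    (hC : ∀ u, ConcaveOn ℝ (stdSimplex ℝ X) (fun b => C b u)) (hρ0 : 0 ≤ ρ)
    {W : (X → ℝ) → ℝ} (hW : ConcaveOn ℝ (stdSimplex ℝ X) W) :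
    ConcaveOn ℝ (stdSimplex ℝ X) (Qop P O C ρ W) := by
  haveI : Nonempty (Fin m) := Fin.pos_iff_nonempty.mp (Nat.pos_of_ne_zero (NeZero.ne m))
  refine ⟨convex_stdSimplex ℝ X, ?_⟩
  intro b1 hb1 b2 hb2 a c ha hc hac
  refine le_ciInf fun u => ?_
  simp only [smul_eq_mul]
  have h1 : Qop P O C ρ W b1 ≤ Qval P O C ρ W b1 u := ciInf_le (Finite.bddBelow_range _) u
  have h2 : Qop P O C ρ W b2 ≤ Qval P O C ρ W b2 u := ciInf_le (Finite.bddBelow_range _) u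
  have h3 := (Qval_concave hP hO hC hρ0 hW u).2 hb1 hb2 ha hc hac
  simp only [smul_eq_mul] at h3
  nlinarith [mul_le_mul_of_nonneg_left h1 ha, mul_le_mul_of_nonneg_left h2 hc]

lemma Qval_dist (hP : RowStochastic P) (hO : ∀ u, RowStochastic (O u)) (hρ0 : 0 ≤ ρ)
    {f g : (X → ℝ) → ℝ} {D : ℝ} (hD : ∀ b ∈ stdSimplex ℝ X, |f b - g b| ≤ D)
    {b : X → ℝ} (hb : b ∈ stdSimplex ℝ X) (u : Fin m) :
    |Qval P O C ρ f b u - Qval P O C ρ g b u| ≤ ρ * D := by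
  have hdiff : Qval P O C ρ f b u - Qval P O C ρ g b u
      = ρ * ∑ y, sigNorm P (O u) b y * (f (filt P (O u) b y) - g (filt P (O u) b y)) := by
    unfold Qval
    have h : ∑ y, sigNorm P (O u) b y * (f (filt P (O u) b y) - g (filt P (O u) b y))
        = (∑ y, sigNorm P (O u) b y * f (filt P (O u) b y))
          - ∑ y, sigNorm P (O u) b y * g (filt P (O u) b y) := by
      rw [← Finset.sum_sub_distrib]
      exact Finset.sum_congr rfl fun y _ => by ring
    rw [h]; ring
  rw [hdiff, abs_mul, abs_of_nonneg hρ0]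
  refine mul_le_mul_of_nonneg_left ?_ hρ0
  calc |∑ y, sigNorm P (O u) b y * (f (filt P (O u) b y) - g (filt P (O u) b y))|
      ≤ ∑ y, |sigNorm P (O u) b y * (f (filt P (O u) b y) - g (filt P (O u) b y))| :=
        Finset.abs_sum_le_sum_abs _ _
    _ ≤ ∑ y, sigNorm P (O u) b y * D := by
        refine Finset.sum_le_sum fun y _ => ?_
        rw [abs_mul, abs_of_nonneg (sigNorm_nonneg hP (hO u).1 hb y)]
        rcases eq_or_lt_of_le (sigNorm_nonneg hP (hO u).1 hb y) with h | h
        · rw [← h, zero_mul, zero_mul]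
        · exact mul_le_mul_of_nonneg_left (hD _ (filt_mem hP (hO u).1 hb h)) h.le
    _ = D := by rw [← Finset.sum_mul, sum_sigNorm hP (hO u) hb, one_mul]

lemma Qop_contract (hP : RowStochastic P) (hO : ∀ u, RowStochastic (O u)) (hρ0 : 0 ≤ ρ)
    {f g : (X → ℝ) → ℝ} {D : ℝ} (hD : ∀ b ∈ stdSimplex ℝ X, |f b - g b| ≤ D)
    {b : X → ℝ} (hb : b ∈ stdSimplex ℝ X) :
    |Qop P O C ρ f b - Qop P O C ρ g b| ≤ ρ * D := by
  haveI : Nonempty (Fin m) := Fin.pos_iff_nonempty.mp (Nat.pos_of_ne_zero (NeZero.ne m))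
  rw [abs_le]
  constructor
  · rw [neg_le, neg_sub]
    have : ∀ u : Fin m, Qop P O C ρ g b - ρ * D ≤ Qval P O C ρ f b u := by
      intro u
      have h1 : Qop P O C ρ g b ≤ Qval P O C ρ g b u := ciInf_le (Finite.bddBelow_range _) u
      have h2 := (abs_le.mp (Qval_dist (C := C) hP hO hρ0 hD hb u)).1
      linarith
    have := le_ciInf fun u => this u
    have h3 : Qop P O C ρ g b - ρ * D ≤ Qop P O C ρ f b := this
    linarith
  · have : ∀ u : Fin m, Qop P O C ρ f b - ρ * D ≤ Qval P O C ρ g b u := by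
      intro u
      have h1 : Qop P O C ρ f b ≤ Qval P O C ρ f b u := ciInf_le (Finite.bddBelow_range _) u
      have h2 := (abs_le.mp (Qval_dist (C := C) hP hO hρ0 hD hb u)).2
      linarith
    have h3 : Qop P O C ρ f b - ρ * D ≤ Qop P O C ρ g b := le_ciInf fun u => this u
    linarith

end Op

lemma concave_of_tendsto {E : Type*} [AddCommGroup E] [Module ℝ E] {s : Set E} (hs : Convex ℝ s)
    {F : ℕ → E → ℝ} {f : E → ℝ} (hF : ∀ n, ConcaveOn ℝ s (F n))
    (h : ∀ x ∈ s, Filter.Tendsto (fun n => F n x) Filter.atTop (nhds (f x))) :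
    ConcaveOn ℝ s f := by
  refine ⟨hs, fun x hx y hy a c ha hc hac => ?_⟩
  have hxy : a • x + c • y ∈ s := hs hx hy ha hc hac
  refine le_of_tendsto_of_tendsto'
    (f := fun n => a • F n x + c • F n y) (g := fun n => F n (a • x + c • y))
    (((h x hx).const_smul a).add ((h y hy).const_smul c)) (h _ hxy)
    (fun n => (hF n).2 hx hy ha hc hac)

noncomputable def vIter {X Y : Type*} [Fintype X] [Fintype Y] {m : ℕ} [NeZero m]
    (P : Matrix X X ℝ) (O : Fin m → Matrix X Y ℝ)
    (C : (X → ℝ) → Fin m → ℝ) (ρ : ℝ) : ℕ → (X → ℝ) → ℝ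
  | 0 => fun _ => 0
  | n + 1 => Qop P O C ρ (vIter P O C ρ n)


end AuxBW

/-- Ordinal sensitivity of the optimal cost under Blackwell dominance: if two
discounted POMDPs share `(P, C, ρ)` with concave costs and `O¹(u) ⪰_B O²(u)` for
every action `u`, then their optimal value functions satisfy `V₁ ≤ V₂` on the
belief simplex. -/
theorem ordinal_sensitivity_blackwell {X Y1 Y2 : Type*}
    [Fintype X] [Fintype Y1] [Fintype Y2] {m : ℕ} [NeZero m]
    (P : Matrix X X ℝ) (hP : RowStochastic P)
    (O1 : Fin m → Matrix X Y1 ℝ) (O2 : Fin m → Matrix X Y2 ℝ)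
    (hO1 : ∀ u, RowStochastic (O1 u)) (hO2 : ∀ u, RowStochastic (O2 u))
    (hdom : ∀ u : Fin m, Blackwell (O1 u) (O2 u))
    (C : (X → ℝ) → Fin m → ℝ)
    (hC : ∀ u, ConcaveOn ℝ (stdSimplex ℝ X) (fun b => C b u))
    (ρ : ℝ) (hρ0 : 0 ≤ ρ) (hρ1 : ρ < 1)
    (V1 V2 : (X → ℝ) → ℝ)
    (hV1bdd : ∃ M : ℝ, ∀ b ∈ stdSimplex ℝ X, |V1 b| ≤ M)
    (hV2bdd : ∃ M : ℝ, ∀ b ∈ stdSimplex ℝ X, |V2 b| ≤ M)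
    (hBellman1 : ∀ b ∈ stdSimplex ℝ X,
      IsLeast {v : ℝ | ∃ u : Fin m, v = Qval P O1 C ρ V1 b u} (V1 b))
    (hBellman2 : ∀ b ∈ stdSimplex ℝ X,
      IsLeast {v : ℝ | ∃ u : Fin m, v = Qval P O2 C ρ V2 b u} (V2 b)) :
    ∀ b ∈ stdSimplex ℝ X, V1 b ≤ V2 b := by
  classical
  obtain ⟨M1, hM1⟩ := hV1bdd
  obtain ⟨M2, hM2⟩ := hV2bdd
  -- V1 is a fixed point of the Bellman operator
  have hfix1 : ∀ b ∈ stdSimplex ℝ X, V1 b = Qop P O1 C ρ V1 b := by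
    intro b hb
    have h := (hBellman1 b hb).csInf_eq
    have hset : {v : ℝ | ∃ u : Fin m, v = Qval P O1 C ρ V1 b u}
        = Set.range (fun u => Qval P O1 C ρ V1 b u) := by
      ext v; simp [Set.mem_range, eq_comm]
    rw [hset] at h
    exact h.symm
  -- value-iteration error bound
  have hbound : ∀ n, ∀ b ∈ stdSimplex ℝ X, |vIter P O1 C ρ n b - V1 b| ≤ ρ ^ n * M1 := by
    intro n
    induction n with
    | zero =>
      intro b hb
      simpa [vIter] using hM1 b hb
    | succ n ih =>
      intro b hb
      have := Qop_contract (C := C) hP hO1 hρ0 ih hb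
      rw [show vIter P O1 C ρ (n+1) b = Qop P O1 C ρ (vIter P O1 C ρ n) b from rfl,
        hfix1 b hb]
      calc |Qop P O1 C ρ (vIter P O1 C ρ n) b - Qop P O1 C ρ V1 b| ≤ ρ * (ρ ^ n * M1) := this
        _ = ρ ^ (n+1) * M1 := by ring
  -- V1 is the pointwise limit of concave iterates, hence concave
  have hIterConc : ∀ n, ConcaveOn ℝ (stdSimplex ℝ X) (vIter P O1 C ρ n) := by
    intro n
    induction n with
    | zero => exact concaveOn_const 0 (convex_stdSimplex ℝ X)
    | succ n ih => exact Qop_concave hP hO1 hC hρ0 ih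
  have hpowlim : Filter.Tendsto (fun n => ρ ^ n * M1) Filter.atTop (nhds 0) := by
    simpa using (tendsto_pow_atTop_nhds_zero_of_lt_one hρ0 hρ1).mul_const M1
  have hV1conc : ConcaveOn ℝ (stdSimplex ℝ X) V1 := by
    refine concave_of_tendsto (convex_stdSimplex ℝ X) hIterConc (fun b hb => ?_)
    have h0 : Filter.Tendsto (fun n => vIter P O1 C ρ n b - V1 b) Filter.atTop (nhds 0) :=
      squeeze_zero_norm (fun n => by simpa [Real.norm_eq_abs] using hbound n b hb) hpowlim
    have := h0.add_const (V1 b)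
    simpa using this
  -- one-step improvement
  have claim : ∀ D : ℝ, (∀ b ∈ stdSimplex ℝ X, V1 b - V2 b ≤ D) →
      ∀ b ∈ stdSimplex ℝ X, V1 b - V2 b ≤ ρ * D := by
    intro D hD b hb
    obtain ⟨⟨u, hu⟩, _⟩ := hBellman2 b hb
    have h1 : V1 b ≤ Qval P O1 C ρ V1 b u := (hBellman1 b hb).2 ⟨u, rfl⟩
    obtain ⟨R, hR, hOR⟩ := hdom u
    have h2 := blackwell_sum hP (hO1 u).1 hR hOR hV1conc hb
    have h3 : (∑ y2, sigNorm P (O2 u) b y2 * V1 (filt P (O2 u) b y2))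
        - (∑ y2, sigNorm P (O2 u) b y2 * V2 (filt P (O2 u) b y2)) ≤ D := by
      have e1 : (∑ y2, sigNorm P (O2 u) b y2 * V1 (filt P (O2 u) b y2))
          - (∑ y2, sigNorm P (O2 u) b y2 * V2 (filt P (O2 u) b y2))
          = ∑ y2, sigNorm P (O2 u) b y2
              * (V1 (filt P (O2 u) b y2) - V2 (filt P (O2 u) b y2)) := by
        rw [← Finset.sum_sub_distrib]
        exact Finset.sum_congr rfl fun y2 _ => by ring
      rw [e1]
      calc ∑ y2, sigNorm P (O2 u) b y2
              * (V1 (filt P (O2 u) b y2) - V2 (filt P (O2 u) b y2))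
          ≤ ∑ y2, sigNorm P (O2 u) b y2 * D := by
            refine Finset.sum_le_sum fun y2 _ => ?_
            rcases eq_or_lt_of_le (sigNorm_nonneg hP (hO2 u).1 hb y2) with h | h
            · rw [← h, zero_mul, zero_mul]
            · exact mul_le_mul_of_nonneg_left (hD _ (filt_mem hP (hO2 u).1 hb h)) h.le
        _ = D := by rw [← Finset.sum_mul, sum_sigNorm hP (hO2 u) hb, one_mul]
    have hA := mul_le_mul_of_nonneg_left h2 hρ0
    have hB := mul_le_mul_of_nonneg_left h3 hρ0
    rw [mul_sub] at hB
    unfold Qval at h1 hu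
    linarith
  -- iterate the improvement
  have hIter : ∀ n, ∀ b ∈ stdSimplex ℝ X, V1 b - V2 b ≤ ρ ^ n * (M1 + M2) := by
    intro n
    induction n with
    | zero =>
      intro b hb
      have := abs_le.mp (hM1 b hb)
      have := abs_le.mp (hM2 b hb)
      rw [pow_zero, one_mul]
      linarith [(abs_le.mp (hM1 b hb)).2, (abs_le.mp (hM2 b hb)).1]
    | succ n ih =>
      intro b hb
      have := claim _ ih b hb
      calc V1 b - V2 b ≤ ρ * (ρ ^ n * (M1 + M2)) := this
        _ = ρ ^ (n+1) * (M1 + M2) := by ring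
  intro b hb
  have hlim : Filter.Tendsto (fun n => ρ ^ n * (M1 + M2)) Filter.atTop (nhds 0) := by
    simpa using (tendsto_pow_atTop_nhds_zero_of_lt_one hρ0 hρ1).mul_const (M1 + M2)
  have := ge_of_tendsto' hlim (fun n => hIter n b hb)
  linarith
end
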